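/- Universal bound on the posterior mean of τ under the exponential hyperprior: Let m(y,τ) = ∫_ℝ φ(y−μ) π(μ|τ) dμ be the Horseshoe marginal likelihood and impose the hyperprior π(τ) = n e^{−nτ} 1{τ>0}. Then for every n ≥ 1 and every observation vector Y ∈ ℝⁿ, the posterior mean satisfies E[τ|Y] = ∫₀^∞ τ · n e^{−nτ} ∏_{i=1}^n m(Y_i,τ) dτ / ∫₀^∞ n e^{−nτ} ∏_{i=1}^n m(Y_i,τ) dτ ≤ (n+1)/n. -/

import Mathlib

open MeasureTheory Filter
open scoped Classical

/-- Density of `N(0,s)`. -/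
noncomputable def gauss (s x : ℝ) : ℝ :=
  (Real.sqrt (2 * Real.pi * s))⁻¹ * Real.exp (-x ^ 2 / (2 * s))

/-- Univariate Horseshoe prior density with global scale `τ`. -/
noncomputable def hs (τ θ : ℝ) : ℝ :=
  ∫ l in Set.Ioi (0 : ℝ), gauss (l ^ 2 * τ ^ 2) θ * ((2 / Real.pi) * (1 + l ^ 2)⁻¹)

/-- Horseshoe marginal likelihood `m(y,τ)`. -/
noncomputable def marg (y τ : ℝ) : ℝ :=
  ∫ μ : ℝ, gauss 1 (y - μ) * hs τ μ

/-- Posterior expectation of `f(τ)` given `Y` under the exponential hyperprior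
`π(τ) = n e^{−nτ} 1{τ>0}`. -/
noncomputable def postExp (n : ℕ) (f : ℝ → ℝ) (Y : Fin n → ℝ) : ℝ :=
  (∫ τ in Set.Ioi (0 : ℝ), f τ * ((n : ℝ) * Real.exp (-(n : ℝ) * τ)) * ∏ i, marg (Y i) τ) /
    ∫ τ in Set.Ioi (0 : ℝ), ((n : ℝ) * Real.exp (-(n : ℝ) * τ)) * ∏ i, marg (Y i) τ

/-!
Substituting `s = λτ` writes `π(θ|τ)` as a normal scale mixture with mixing density the
half-Cauchy density of scale `τ`. Two half-Cauchy densities of scales `σ ≤ τ` are within a factor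
`τ/σ` of each other, hence so are `m(y,σ)` and `m(y,τ)`, and `τ ↦ τ⁻ⁿ ∏ᵢ m(Yᵢ,τ)` is
nonincreasing. The posterior of `τ` is therefore the `Gamma(n+1, n)` law, of density
`∝ τⁿ e^{-nτ}` and mean `(n+1)/n`, reweighted by a nonincreasing function, and by Chebyshev's
integral inequality this can only lower the mean.
-/

open Real Set
open scoped Nat

/-- No integrability assumption is needed: two nonnegative functions within a factor `r` of each
other are integrable together. -/
theorem integral_le_mul_integral_of_le_mul_of_le_mul {α : Type*} [MeasurableSpace α]
    {μ : Measure α} {f g : α → ℝ} {r : ℝ} (hr : 0 < r) (hf : 0 ≤ᵐ[μ] f)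
    (hfm : AEStronglyMeasurable f μ) (hgm : AEStronglyMeasurable g μ)
    (hfg : ∀ᵐ x ∂μ, f x ≤ r * g x) (hgf : ∀ᵐ x ∂μ, g x ≤ r * f x) :
    ∫ x, f x ∂μ ≤ r * ∫ x, g x ∂μ := by
  have hg : 0 ≤ᵐ[μ] g := by
    filter_upwards [hf, hfg] with x hfx hfgx
    exact nonneg_of_mul_nonneg_right (hfx.trans hfgx) hr
  by_cases hgi : Integrable g μ
  · have hfi : Integrable f μ := (hgi.const_mul r).mono' hfm <| by
      filter_upwards [hf, hfg] with x hfx hfgx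
      rwa [Real.norm_of_nonneg hfx]
    rw [← integral_const_mul]
    exact integral_mono_ae hfi (hgi.const_mul r) hfg
  · have hfi : ¬Integrable f μ := fun hfi => hgi <| (hfi.const_mul r).mono' hgm <| by
      filter_upwards [hg, hgf] with x hgx hgfx
      rwa [Real.norm_of_nonneg hgx]
    rw [integral_undef hfi, integral_undef hgi, mul_zero]

/-- Chebyshev's integral inequality for the oppositely ordered functions `x` and `w₂ / w₁`. -/
theorem integral_id_mul_mul_integral_le_of_antitone_ratio {ν : Measure ℝ} [SFinite ν]
    {S : Set ℝ} {w₁ w₂ : ℝ → ℝ} (hS : ∀ᵐ x ∂ν, x ∈ S)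
    (hw : ∀ s ∈ S, ∀ t ∈ S, s ≤ t → w₁ s * w₂ t ≤ w₁ t * w₂ s)
    (h₁ : Integrable w₁ ν) (h₁' : Integrable (fun x => x * w₁ x) ν)
    (h₂ : Integrable w₂ ν) (h₂' : Integrable (fun x => x * w₂ x) ν) :
    (∫ x, x * w₂ x ∂ν) * ∫ x, w₁ x ∂ν ≤ (∫ x, w₂ x ∂ν) * ∫ x, x * w₁ x ∂ν := by
  have hpair : ∀ᵐ p ∂ν.prod ν,
      0 ≤ (p.1 * w₁ p.1) * w₂ p.2 - (p.1 * w₂ p.1) * w₁ p.2 - w₁ p.1 * (p.2 * w₂ p.2)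
        + w₂ p.1 * (p.2 * w₁ p.2) := by
    filter_upwards [Measure.quasiMeasurePreserving_fst.ae hS,
      Measure.quasiMeasurePreserving_snd.ae hS] with p hp₁ hp₂
    have key : 0 ≤ (p.1 - p.2) * (w₁ p.1 * w₂ p.2 - w₁ p.2 * w₂ p.1) := by
      rcases le_total p.1 p.2 with h | h
      · exact mul_nonneg_of_nonpos_of_nonpos (sub_nonpos.2 h)
          (sub_nonpos.2 (hw _ hp₁ _ hp₂ h))
      · exact mul_nonneg (sub_nonneg.2 h) (sub_nonneg.2 (hw _ hp₂ _ hp₁ h))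
    linarith
  have hint := integral_nonneg_of_ae hpair
  rw [integral_add ?_ (h₂.mul_prod h₁'), integral_sub ?_ (h₁.mul_prod h₂'),
    integral_sub (h₁'.mul_prod h₂) (h₂'.mul_prod h₁), integral_prod_mul (fun x => x * w₁ x) w₂,
    integral_prod_mul (fun x => x * w₂ x) w₁, integral_prod_mul w₁ (fun x => x * w₂ x),
    integral_prod_mul w₂ (fun x => x * w₁ x)] at hint
  · linarith
  · exact (h₁'.mul_prod h₂).sub (h₂'.mul_prod h₁)
  · exact ((h₁'.mul_prod h₂).sub (h₂'.mul_prod h₁)).sub (h₁.mul_prod h₂')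

theorem integral_pow_mul_exp_neg_mul_Ioi (k : ℕ) {r : ℝ} (hr : 0 < r) :
    ∫ t in Ioi 0, t ^ k * rexp (-r * t) = k ! / r ^ (k + 1) := by
  have h := integral_rpow_mul_exp_neg_mul_Ioi (by positivity : (0 : ℝ) < k + 1) hr
  simp only [add_sub_cancel_right, rpow_natCast, ← neg_mul] at h
  rw [h, Gamma_nat_eq_factorial, one_div, inv_rpow hr.le, ← rpow_natCast]
  push_cast
  ring

theorem integrableOn_pow_mul_exp_neg_mul_Ioi (k : ℕ) {r : ℝ} (hr : 0 < r) :
    IntegrableOn (fun t => t ^ k * rexp (-r * t)) (Ioi 0) :=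
  Integrable.of_integral_ne_zero <| by
    rw [integral_pow_mul_exp_neg_mul_Ioi k hr]
    positivity

theorem integral_pow_succ_mul_exp_neg_mul_Ioi (k : ℕ) {r : ℝ} (hr : 0 < r) :
    ∫ t in Ioi 0, t ^ (k + 1) * rexp (-r * t) =
      (k + 1) / r * ∫ t in Ioi 0, t ^ k * rexp (-r * t) := by
  rw [integral_pow_mul_exp_neg_mul_Ioi _ hr, integral_pow_mul_exp_neg_mul_Ioi _ hr,
    Nat.factorial_succ]
  push_cast
  field_simp
  ring

theorem gauss_nonneg (s x : ℝ) : 0 ≤ gauss s x := by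
  unfold gauss
  positivity

theorem measurable_gauss : Measurable (Function.uncurry gauss) := by
  unfold Function.uncurry gauss
  fun_prop

noncomputable def halfCauchy (τ s : ℝ) : ℝ :=
  2 / π * (τ / (τ ^ 2 + s ^ 2))

theorem halfCauchy_nonneg {τ : ℝ} (hτ : 0 ≤ τ) (s : ℝ) : 0 ≤ halfCauchy τ s := by
  unfold halfCauchy
  positivity

theorem halfCauchy_le_div_mul_halfCauchy {σ τ : ℝ} (hσ : 0 < σ) (hστ : σ ≤ τ) (s : ℝ) :
    halfCauchy τ s ≤ τ / σ * halfCauchy σ s := calc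
  halfCauchy τ s ≤ 2 / π * (τ / (σ ^ 2 + s ^ 2)) := by
    unfold halfCauchy
    gcongr
    linarith
  _ = τ / σ * halfCauchy σ s := by unfold halfCauchy; field_simp

theorem halfCauchy_le_div_mul_halfCauchy' {σ τ : ℝ} (hσ : 0 < σ) (hστ : σ ≤ τ) (s : ℝ) :
    halfCauchy σ s ≤ τ / σ * halfCauchy τ s := calc
  halfCauchy σ s ≤ 2 / π * (τ ^ 2 / (σ * (τ ^ 2 + s ^ 2))) := by
    have hτ : 0 < τ := hσ.trans_le hστ
    unfold halfCauchy
    refine mul_le_mul_of_nonneg_left ?_ (by positivity)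
    rw [div_le_div_iff₀ (by positivity) (by positivity)]
    nlinarith [mul_le_mul hστ hστ hσ.le (hσ.le.trans hστ), sq_nonneg s]
  _ = τ / σ * halfCauchy τ s := by unfold halfCauchy; field_simp

theorem hs_eq_integral_halfCauchy {τ : ℝ} (hτ : 0 < τ) (θ : ℝ) :
    hs τ θ = ∫ s in Ioi 0, gauss (s ^ 2) θ * halfCauchy τ s := by
  rw [← mul_inv_cancel_left₀ hτ.ne' (∫ s in Ioi 0, gauss (s ^ 2) θ * halfCauchy τ s),
    ← smul_eq_mul τ⁻¹, ← mul_zero τ, ← integral_comp_mul_left_Ioi _ 0 hτ,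
    ← integral_const_mul, hs]
  refine setIntegral_congr_fun measurableSet_Ioi fun l _ => ?_
  have hden : τ ^ 2 + (τ * l) ^ 2 = τ ^ 2 * (1 + l ^ 2) := by ring
  simp only [halfCauchy, hden]
  field_simp

theorem hs_nonneg (τ θ : ℝ) : 0 ≤ hs τ θ :=
  setIntegral_nonneg measurableSet_Ioi fun _ _ => mul_nonneg (gauss_nonneg _ _) (by positivity)

theorem marg_nonneg (y τ : ℝ) : 0 ≤ marg y τ :=
  integral_nonneg fun θ => mul_nonneg (gauss_nonneg _ _) (hs_nonneg τ θ)

theorem measurable_hs (τ : ℝ) : Measurable (hs τ) := by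
  have hF : Measurable fun p : ℝ × ℝ =>
      gauss (p.2 ^ 2 * τ ^ 2) p.1 * ((2 / π) * (1 + p.2 ^ 2)⁻¹) :=
    (measurable_gauss.comp (f := fun p : ℝ × ℝ => (p.2 ^ 2 * τ ^ 2, p.1)) (by fun_prop)).mul
      (by fun_prop)
  exact hF.stronglyMeasurable.integral_prod_right.measurable

theorem hs_le_mul_hs {a b r : ℝ} (ha : 0 < a) (hb : 0 < b) (hr : 0 < r)
    (hab : ∀ s, halfCauchy a s ≤ r * halfCauchy b s)
    (hba : ∀ s, halfCauchy b s ≤ r * halfCauchy a s) (θ : ℝ) :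
    hs a θ ≤ r * hs b θ := by
  have hm : ∀ c, AEStronglyMeasurable (fun s => gauss (s ^ 2) θ * halfCauchy c s)
      (volume.restrict (Ioi 0)) := fun c =>
    ((measurable_gauss.comp (f := fun s => (s ^ 2, θ)) (by fun_prop)).mul
      (by unfold halfCauchy; fun_prop)).aestronglyMeasurable
  rw [hs_eq_integral_halfCauchy ha, hs_eq_integral_halfCauchy hb]
  refine integral_le_mul_integral_of_le_mul_of_le_mul hr
    (ae_of_all _ fun s => mul_nonneg (gauss_nonneg _ _) (halfCauchy_nonneg ha.le s)) (hm a) (hm b)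
    (ae_of_all _ fun s => ?_) (ae_of_all _ fun s => ?_)
  · rw [mul_left_comm]
    exact mul_le_mul_of_nonneg_left (hab s) (gauss_nonneg _ _)
  · rw [mul_left_comm]
    exact mul_le_mul_of_nonneg_left (hba s) (gauss_nonneg _ _)

theorem marg_le_mul_marg {a b r : ℝ} (hr : 0 < r) (hab : ∀ θ, hs a θ ≤ r * hs b θ)
    (hba : ∀ θ, hs b θ ≤ r * hs a θ) (y : ℝ) :
    marg y a ≤ r * marg y b := by
  have hm : ∀ c, AEStronglyMeasurable (fun θ => gauss 1 (y - θ) * hs c θ) volume := fun c =>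
    ((measurable_gauss.comp (f := fun θ => (1, y - θ)) (by fun_prop)).mul
      (measurable_hs c)).aestronglyMeasurable
  refine integral_le_mul_integral_of_le_mul_of_le_mul hr
    (ae_of_all _ fun θ => mul_nonneg (gauss_nonneg _ _) (hs_nonneg a θ)) (hm a) (hm b)
    (ae_of_all _ fun θ => ?_) (ae_of_all _ fun θ => ?_)
  · rw [mul_left_comm]
    exact mul_le_mul_of_nonneg_left (hab θ) (gauss_nonneg _ _)
  · rw [mul_left_comm]
    exact mul_le_mul_of_nonneg_left (hba θ) (gauss_nonneg _ _)

theorem marg_le_div_mul_marg {σ τ : ℝ} (hσ : 0 < σ) (hστ : σ ≤ τ) (y : ℝ) :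
    marg y τ ≤ τ / σ * marg y σ := by
  have hτ : 0 < τ := hσ.trans_le hστ
  have hr : 0 < τ / σ := div_pos hτ hσ
  exact marg_le_mul_marg hr
    (hs_le_mul_hs hτ hσ hr (halfCauchy_le_div_mul_halfCauchy hσ hστ)
      (halfCauchy_le_div_mul_halfCauchy' hσ hστ))
    (hs_le_mul_hs hσ hτ hr (halfCauchy_le_div_mul_halfCauchy' hσ hστ)
      (halfCauchy_le_div_mul_halfCauchy hσ hστ)) y

theorem pow_mul_prod_marg_le {ι : Type*} [Fintype ι] {σ τ : ℝ} (hσ : 0 < σ) (hστ : σ ≤ τ)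
    (Y : ι → ℝ) :
    σ ^ Fintype.card ι * ∏ i, marg (Y i) τ ≤ τ ^ Fintype.card ι * ∏ i, marg (Y i) σ := by
  have hprod : ∏ i, marg (Y i) τ ≤ (τ / σ) ^ Fintype.card ι * ∏ i, marg (Y i) σ := by
    rw [← Finset.card_univ, ← Finset.prod_const, ← Finset.prod_mul_distrib]
    exact Finset.prod_le_prod (fun i _ => marg_nonneg _ _) fun i _ =>
      marg_le_div_mul_marg hσ hστ (Y i)
  calc σ ^ Fintype.card ι * ∏ i, marg (Y i) τ
      ≤ σ ^ Fintype.card ι * ((τ / σ) ^ Fintype.card ι * ∏ i, marg (Y i) σ) := by gcongr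
    _ = τ ^ Fintype.card ι * ∏ i, marg (Y i) σ := by
      rw [← mul_assoc, ← mul_pow, mul_div_cancel₀ τ hσ.ne']

noncomputable def postDensity (n : ℕ) (Y : Fin n → ℝ) (τ : ℝ) : ℝ :=
  n * rexp (-n * τ) * ∏ i, marg (Y i) τ

theorem postDensity_nonneg (n : ℕ) (Y : Fin n → ℝ) (τ : ℝ) : 0 ≤ postDensity n Y τ :=
  mul_nonneg (by positivity) (Finset.prod_nonneg fun i _ => marg_nonneg _ _)

theorem postExp_id_eq (n : ℕ) (Y : Fin n → ℝ) :
    postExp n (fun t => t) Y =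
      (∫ τ in Ioi 0, τ * postDensity n Y τ) / ∫ τ in Ioi 0, postDensity n Y τ := by
  simp only [postExp, postDensity, mul_assoc]

theorem pow_mul_exp_mul_postDensity_le (n : ℕ) (Y : Fin n → ℝ) {s t : ℝ} (hs : 0 < s)
    (hst : s ≤ t) :
    s ^ n * rexp (-n * s) * postDensity n Y t ≤ t ^ n * rexp (-n * t) * postDensity n Y s := calc
  s ^ n * rexp (-n * s) * postDensity n Y t
      = n * rexp (-n * s) * rexp (-n * t) * (s ^ n * ∏ i, marg (Y i) t) := by
    unfold postDensity; ring
  _ ≤ n * rexp (-n * s) * rexp (-n * t) * (t ^ n * ∏ i, marg (Y i) s) := by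
    refine mul_le_mul_of_nonneg_left ?_ (by positivity)
    simpa using pow_mul_prod_marg_le hs hst Y
  _ = t ^ n * rexp (-n * t) * postDensity n Y s := by
    unfold postDensity; ring

/-- Universal bound on the posterior mean of `τ` under the exponential hyperprior. -/
theorem horseshoe_posterior_mean_tau_universal_bound
    (n : ℕ) (hn : 1 ≤ n) (Y : Fin n → ℝ) :
    postExp n (fun t => t) Y ≤ ((n : ℝ) + 1) / n := by
  have hn0 : (0 : ℝ) < n := by exact_mod_cast hn
  rw [postExp_id_eq]
  by_cases hD : IntegrableOn (postDensity n Y) (Ioi 0)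
  swap
  · rw [integral_undef hD, div_zero]
    positivity
  by_cases hN : IntegrableOn (fun τ => τ * postDensity n Y τ) (Ioi 0)
  swap
  · rw [integral_undef hN, zero_div]
    positivity
  have hcheb := integral_id_mul_mul_integral_le_of_antitone_ratio
    (ae_restrict_mem measurableSet_Ioi)
    (fun s hs t _ hst => pow_mul_exp_mul_postDensity_le n Y hs hst)
    (integrableOn_pow_mul_exp_neg_mul_Ioi n hn0)
    ((integrableOn_pow_mul_exp_neg_mul_Ioi (n + 1) hn0).congr_fun (fun t _ => by ring)
      measurableSet_Ioi) hD hN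
  simp only [← mul_assoc, ← pow_succ', integral_pow_succ_mul_exp_neg_mul_Ioi n hn0] at hcheb
  have hGamma : 0 < ∫ t in Ioi 0, t ^ n * rexp (-n * t) := by
    rw [integral_pow_mul_exp_neg_mul_Ioi n hn0]
    positivity
  refine div_le_of_le_mul₀ (setIntegral_nonneg measurableSet_Ioi fun τ _ =>
    postDensity_nonneg n Y τ) (by positivity) ?_
  exact le_of_mul_le_mul_right (hcheb.trans_eq (by ring)) hGamma
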